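/- If X and Y are cash-flows arriving at time t with nonzero expected values and nonzero present values, and E(X+Y) ≠ 0, then the reciprocal of the cost of capital of the sum satisfies R(X+Y)⁻¹ = β·R(X)⁻¹ + (1-β)·R(Y)⁻¹ where β = E(X)/(E(X)+E(Y)). -/
import Mathlib

theorem stmt_1 {M : Type*} [AddCommGroup M] [Module ℝ M]
    (V E : M →ₗ[ℝ] ℝ) (X Y : M)
    (hEX : E X ≠ 0) (hEY : E Y ≠ 0) (hVX : V X ≠ 0) (hVY : V Y ≠ 0)
    (hEsum : E X + E Y ≠ 0) (hVsum : V X + V Y ≠ 0)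
    (hEXY : E (X + Y) ≠ 0) :
    (E (X + Y) / V (X + Y))⁻¹ =
      (E X / (E X + E Y)) * (E X / V X)⁻¹ +
      (1 - E X / (E X + E Y)) * (E Y / V Y)⁻¹ := by
  simp only [map_add]
  field_simp
  ring
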